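/- (Theorem 1(a)) Let n ≥ 3 and let r_1, …, r_n > 0. Suppose α_1, …, α_n is a connecting cycle whose consecutive vertices are distinct (l_j ≠ 0 for all j). Let A_j denote the signed area of the triangle (O, p_j, p_{j+1}), i.e. A_j = (1/2) r_j r_{j+1} sin(α_{j+1} − α_j). Then all n partial derivatives ∂L/∂α_j vanish at this configuration if and only if for every j (indices mod n) one has A_{j−1} / l_{j−1} = A_j / l_j (the Fermat condition at each vertex). -/

import Mathlib

open Real

/-!
By the law of cosines `l_j² = r_j² + r_{j+1}² − 2 r_j r_{j+1} cos(α_{j+1} − α_j)`, so the angle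
`α_j` enters the perimeter only through `l_{j−1}` and `l_j`, with
`∂l_j/∂α_j = −2 A_j / l_j` and `∂l_{j−1}/∂α_j = 2 A_{j−1} / l_{j−1}`. Hence
`∂L/∂α_j = 2 (A_{j−1}/l_{j−1} − A_j/l_j)`, which vanishes exactly under the Fermat condition.
-/

/-- The length of the `j`-th side of the connecting cycle for `n` concentric circles with
radii `r` and polar angles `α`, indices mod `n`. -/
noncomputable def sideLen {n : ℕ} [NeZero n] (r α : Fin n → ℝ) (j : Fin n) : ℝ :=
  Real.sqrt (r j ^ 2 + r (j + 1) ^ 2 - 2 * r j * r (j + 1) * Real.cos (α (j + 1) - α j))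

/-- The perimeter `L = Σ_j l_j` of the connecting cycle. -/
noncomputable def perim {n : ℕ} [NeZero n] (r α : Fin n → ℝ) : ℝ :=
  ∑ j, sideLen r α j

/-- The signed area `A_j = (1/2) r_j r_{j+1} sin(α_{j+1} − α_j)` of the triangle
`(O, p_j, p_{j+1})`. -/
noncomputable def sgnArea {n : ℕ} [NeZero n] (r α : Fin n → ℝ) (j : Fin n) : ℝ :=
  r j * r (j + 1) * Real.sin (α (j + 1) - α j) / 2

lemma hasDerivAt_sqrt_lawOfCosines {a b c x : ℝ}
    (h : a ^ 2 + b ^ 2 - 2 * a * b * cos (x - c) ≠ 0) :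
    HasDerivAt (fun t => √(a ^ 2 + b ^ 2 - 2 * a * b * cos (t - c)))
      (a * b * sin (x - c) / √(a ^ 2 + b ^ 2 - 2 * a * b * cos (x - c))) x := by
  have hrad : HasDerivAt (fun t => a ^ 2 + b ^ 2 - 2 * a * b * cos (t - c))
      (2 * a * b * sin (x - c)) x := by
    refine ((((hasDerivAt_id' x).sub_const c).cos.const_mul (2 * a * b)).const_sub
      (a ^ 2 + b ^ 2)).congr_deriv ?_
    ring
  convert hrad.sqrt h using 1
  field_simp

section CyclicPolygon

variable {n : ℕ} [NeZero n] (r α : Fin n → ℝ)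

lemma one_ne_zero_of_sideLen_ne_zero {j : Fin n} (hl : sideLen r α j ≠ 0) : (1 : Fin n) ≠ 0 := by
  intro h
  apply hl
  rw [sideLen, h, add_zero, sub_self, cos_zero]
  ring_nf
  exact Real.sqrt_zero

lemma sideLen_update_of_ne {j k : Fin n} (hk : k ≠ j) (hk1 : k + 1 ≠ j) (t : ℝ) :
    sideLen r (Function.update α j t) k = sideLen r α k := by
  rw [sideLen, sideLen, Function.update_of_ne hk, Function.update_of_ne hk1]

lemma sideLen_radicand_ne_zero {j : Fin n} (hl : sideLen r α j ≠ 0) :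
    r j ^ 2 + r (j + 1) ^ 2 - 2 * r j * r (j + 1) * cos (α (j + 1) - α j) ≠ 0 :=
  (Real.sqrt_ne_zero'.mp hl).ne'

lemma hasDerivAt_sideLen_update_self {j : Fin n} (hj : j + 1 ≠ j) (hl : sideLen r α j ≠ 0) :
    HasDerivAt (fun t => sideLen r (Function.update α j t) j)
      (-(2 * sgnArea r α j / sideLen r α j)) (α j) := by
  have hfun : (fun t => sideLen r (Function.update α j t) j) =
      fun t => √(r j ^ 2 + r (j + 1) ^ 2 - 2 * r j * r (j + 1) * cos (t - α (j + 1))) := by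
    funext t
    rw [sideLen, Function.update_self, Function.update_of_ne hj, ← cos_neg, neg_sub]
  have hrad := sideLen_radicand_ne_zero r α hl
  rw [← cos_neg, neg_sub] at hrad
  rw [hfun]
  refine (hasDerivAt_sqrt_lawOfCosines hrad).congr_deriv ?_
  rw [sgnArea, sideLen, ← neg_sub (α (j + 1)), sin_neg, cos_neg]
  ring

lemma hasDerivAt_sideLen_update_succ {j : Fin n} (hj : j + 1 ≠ j) (hl : sideLen r α j ≠ 0) :
    HasDerivAt (fun t => sideLen r (Function.update α (j + 1) t) j)
      (2 * sgnArea r α j / sideLen r α j) (α (j + 1)) := by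
  have hfun : (fun t => sideLen r (Function.update α (j + 1) t) j) =
      fun t => √(r j ^ 2 + r (j + 1) ^ 2 - 2 * r j * r (j + 1) * cos (t - α j)) := by
    funext t
    rw [sideLen, Function.update_self, Function.update_of_ne hj.symm]
  rw [hfun]
  refine (hasDerivAt_sqrt_lawOfCosines (sideLen_radicand_ne_zero r α hl)).congr_deriv ?_
  rw [sgnArea, sideLen]
  ring

lemma hasDerivAt_perim_update (h1 : (1 : Fin n) ≠ 0) (hl : ∀ j, sideLen r α j ≠ 0) (j : Fin n) :
    HasDerivAt (fun t => perim r (Function.update α j t))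
      (2 * (sgnArea r α (j - 1) / sideLen r α (j - 1) - sgnArea r α j / sideLen r α j))
      (α j) := by
  have hsucc (k : Fin n) : k + 1 ≠ k := by simpa using h1
  have hpred : j - 1 ≠ j := by simpa [sub_eq_iff_eq_add] using h1.symm
  have hsplit (β : Fin n → ℝ) : perim r β =
      sideLen r β (j - 1) + sideLen r β j + ∑ k ∈ {j - 1, j}ᶜ, sideLen r β k := by
    rw [perim, ← Finset.sum_pair hpred, Finset.sum_add_sum_compl]
  have hrest : HasDerivAt (fun t => ∑ k ∈ {j - 1, j}ᶜ, sideLen r (Function.update α j t) k)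
      0 (α j) := by
    refine (hasDerivAt_const (α j) (∑ k ∈ {j - 1, j}ᶜ, sideLen r α k)).congr_of_eventuallyEq
      (Filter.Eventually.of_forall fun t => ?_)
    refine Finset.sum_congr rfl fun k hk => ?_
    simp only [Finset.mem_compl, Finset.mem_insert, Finset.mem_singleton, not_or] at hk
    refine sideLen_update_of_ne r α hk.2 ?_ t
    rintro rfl
    exact hk.1 (add_sub_cancel_right k 1).symm
  have hprev := hasDerivAt_sideLen_update_succ r α (hsucc (j - 1)) (hl (j - 1))
  rw [sub_add_cancel] at hprev
  simp_rw [hsplit]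
  refine ((hprev.add (hasDerivAt_sideLen_update_self r α (hsucc j) (hl j))).add
    hrest).congr_deriv ?_
  ring

end CyclicPolygon

theorem stmt_2_general {n : ℕ} [NeZero n] (r : Fin n → ℝ)
    (α : Fin n → ℝ) (hl : ∀ j, sideLen r α j ≠ 0) :
    (∀ j, HasDerivAt (fun t => perim r (Function.update α j t)) 0 (α j)) ↔
      (∀ j : Fin n, sgnArea r α (j - 1) / sideLen r α (j - 1) =
        sgnArea r α j / sideLen r α j) := by
  have hderiv := hasDerivAt_perim_update r α (one_ne_zero_of_sideLen_ne_zero r α (hl 0)) hl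
  refine forall_congr' fun j => ⟨fun hcrit => ?_, fun hfermat => ?_⟩
  · have := hcrit.unique (hderiv j)
    linarith
  · simpa [hfermat] using hderiv j

/-- Theorem 1(a): a connecting cycle with distinct consecutive vertices is a
critical point of the perimeter iff the Fermat condition `A_{j−1}/l_{j−1} = A_j/l_j` holds
at each vertex. -/
theorem stmt_2 {n : ℕ} [NeZero n] (hn : 3 ≤ n) (r : Fin n → ℝ) (hr : ∀ i, 0 < r i)
    (α : Fin n → ℝ) (hl : ∀ j, sideLen r α j ≠ 0) :
    (∀ j, HasDerivAt (fun t => perim r (Function.update α j t)) 0 (α j)) ↔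
      (∀ j : Fin n, sgnArea r α (j - 1) / sideLen r α (j - 1) =
        sgnArea r α j / sideLen r α j) :=
  stmt_2_general r α hl
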